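/- arXiv:2110.00074 — 2 statements merged into one kernel-verified Lean document; each statement's English description precedes it below -/
import Mathlib

section
/- In an undirected graph with unique shortest paths, if a shortest path from x to y intersects a shortest path from u to v, then the set of shared vertices forms a single contiguous subpath: letting a be the first and b the last vertex of u⇝v that lies on x⇝y, the subpath of u⇝v from a to b is also a subpath of x⇝y, and x⇝y and u⇝v share exactly one edge-maximal common subpath. -/
/-- The weight of a walk in an edge-weighted graph. -/
def walkWeight {V : Type} {G : SimpleGraph V} (w : V → V → ℝ) {a b : V}
    (p : G.Walk a b) : ℝ :=
  (p.darts.map fun d => w d.toProd.1 d.toProd.2).sum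

/-!
Let `a` and `b` be the first and the last vertex of `u⇝v` lying on `x⇝y`; every common vertex
lies on the segment `q` of `u⇝v` between them. Both `a` and `b` lie on `x⇝y`, which therefore
contains a segment `m` from `a` to `b`, traversed in one direction or the other. Segments of
shortest paths are shortest paths, and reversal preserves weights, so `q` and `m` are both
shortest `a`-`b` paths and coincide by uniqueness. Hence `q.support` is the common subpath.
-/

open SimpleGraph Walk

namespace SimpleGraph.Walk

variable {V : Type} {G : SimpleGraph V}

lemma IsSubwalk.reverse {a b s t : V} {p : G.Walk a b} {q : G.Walk s t} (h : p.IsSubwalk q) :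
    p.reverse.IsSubwalk q.reverse := by
  obtain ⟨ru, rv, rfl⟩ := h
  exact ⟨rv.reverse, ru.reverse, by simp [reverse_append, append_assoc]⟩

lemma exists_isSubwalk_or_reverse_of_mem_support [DecidableEq V] {s t a b : V}
    (p : G.Walk s t) (ha : a ∈ p.support) (hb : b ∈ p.support) :
    ∃ m : G.Walk a b, m.IsSubwalk p ∨ m.reverse.IsSubwalk p := by
  have ha' : a ∈ (p.takeUntil b hb).support ∨ a ∈ (p.dropUntil b hb).support := by
    rwa [← mem_support_append_iff, take_spec]
  rcases ha' with ha' | ha'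
  · exact ⟨_, .inl ((isSubwalk_dropUntil _ ha').trans (isSubwalk_takeUntil _ hb))⟩
  · refine ⟨((p.dropUntil b hb).takeUntil a ha').reverse, .inr ?_⟩
    rw [reverse_reverse]
    exact (isSubwalk_takeUntil _ ha').trans (isSubwalk_dropUntil _ hb)

lemma exists_isSubwalk_start_covering (P : V → Prop) {s t : V} (p : G.Walk s t)
    (h : ∃ z ∈ p.support, P z) :
    ∃ (a : V) (q : G.Walk a t), q.IsSubwalk p ∧ P a ∧ ∀ z ∈ p.support, P z → z ∈ q.support := by
  induction p with
  | nil =>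
    obtain ⟨z, hz, hPz⟩ := h
    rw [support_nil, List.mem_singleton] at hz
    exact ⟨_, nil, isSubwalk_rfl _, hz ▸ hPz, fun z hz _ => hz⟩
  | @cons s _ _ hadj p ih =>
    by_cases hPs : P s
    · exact ⟨s, cons hadj p, isSubwalk_rfl _, hPs, fun z hz _ => hz⟩
    · have hcover : ∀ z ∈ (cons hadj p).support, P z → z ∈ p.support := by
        intro z hz hPz
        rw [support_cons, List.mem_cons] at hz
        exact hz.resolve_left (by rintro rfl; exact hPs hPz)
      obtain ⟨z, hz, hPz⟩ := h
      obtain ⟨a, q, hq, hPa, hq_cover⟩ := ih ⟨z, hcover z hz hPz, hPz⟩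
      exact ⟨a, q, hq.cons hadj, hPa, fun z hz hPz => hq_cover z (hcover z hz hPz) hPz⟩

lemma exists_isSubwalk_ends_covering (P : V → Prop) {s t : V} (p : G.Walk s t)
    (h : ∃ z ∈ p.support, P z) :
    ∃ (a b : V) (q : G.Walk a b), q.IsSubwalk p ∧ P a ∧ P b ∧
      ∀ z ∈ p.support, P z → z ∈ q.support := by
  obtain ⟨a, q, hq, hPa, hq_cover⟩ := exists_isSubwalk_start_covering P p h
  obtain ⟨b, q', hq', hPb, hq'_cover⟩ :=
    exists_isSubwalk_start_covering P q.reverse ⟨a, by simp, hPa⟩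
  refine ⟨a, b, q'.reverse, (by simpa using hq'.reverse : q'.reverse.IsSubwalk q).trans hq,
    hPa, hPb, fun z hz hPz => ?_⟩
  simpa using hq'_cover z (by simpa using hq_cover z hz hPz) hPz

end SimpleGraph.Walk

section ShortestWalks

variable {V : Type} {G : SimpleGraph V} (w : V → V → ℝ)

def IsShortest {s t : V} (p : G.Walk s t) : Prop :=
  ∀ r : G.Walk s t, walkWeight w p ≤ walkWeight w r

lemma walkWeight_append {a b c : V} (p : G.Walk a b) (q : G.Walk b c) :
    walkWeight w (p.append q) = walkWeight w p + walkWeight w q := by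
  simp [walkWeight, darts_append]

lemma walkWeight_reverse (hsymm : ∀ a b, w a b = w b a) {a b : V} (p : G.Walk a b) :
    walkWeight w p.reverse = walkWeight w p := by
  simp only [walkWeight, darts_reverse, List.map_reverse, List.sum_reverse, List.map_map]
  exact congrArg List.sum (List.map_congr_left fun _ _ => (hsymm _ _).symm)

lemma walkWeight_bypass_le (hw : ∀ a b, 0 ≤ w a b) [DecidableEq V] {a b : V}
    (p : G.Walk a b) : walkWeight w p.bypass ≤ walkWeight w p :=
  (p.darts_bypass_sublist_darts.map _).sum_le_sum (by simp [hw])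

lemma isShortest_of_forall_isPath (hw : ∀ a b, 0 ≤ w a b) {s t : V} {p : G.Walk s t}
    (h : ∀ r : G.Walk s t, r.IsPath → walkWeight w p ≤ walkWeight w r) : IsShortest w p := by
  classical
  exact fun r => (h _ r.bypass_isPath).trans (walkWeight_bypass_le w hw r)

lemma IsShortest.of_isSubwalk {a b s t : V} {p : G.Walk a b} {q : G.Walk s t}
    (hq : IsShortest w q) (h : p.IsSubwalk q) : IsShortest w p := by
  obtain ⟨ru, rv, rfl⟩ := h
  intro r
  have := hq ((ru.append r).append rv)
  simp only [walkWeight_append] at this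
  linarith

lemma IsShortest.reverse (hsymm : ∀ a b, w a b = w b a) {s t : V} {p : G.Walk s t}
    (hp : IsShortest w p) : IsShortest w p.reverse := fun r => by
  rw [walkWeight_reverse w hsymm, ← walkWeight_reverse w hsymm r]
  exact hp r.reverse

lemma IsShortest.exists_subpath_of_mem_support (hsymm : ∀ a b, w a b = w b a)
    [DecidableEq V] {s t a b : V} {p : G.Walk s t} (hp : p.IsPath) (hp_short : IsShortest w p)
    (ha : a ∈ p.support) (hb : b ∈ p.support) :
    ∃ m : G.Walk a b, m.IsPath ∧ IsShortest w m ∧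
      (m.support <:+: p.support ∨ m.support.reverse <:+: p.support) := by
  obtain ⟨m, h | h⟩ := p.exists_isSubwalk_or_reverse_of_mem_support ha hb
  · exact ⟨m, isPath_of_isSubwalk h hp, hp_short.of_isSubwalk w h,
      .inl (isSubwalk_iff_support_isInfix.mp h)⟩
  · refine ⟨m, (m.isPath_reverse_iff).mp (isPath_of_isSubwalk h hp), ?_, .inr ?_⟩
    · simpa using (hp_short.of_isSubwalk w h).reverse w hsymm
    · simpa using isSubwalk_iff_support_isInfix.mp h

end ShortestWalks

/-- In an undirected graph with nonnegative weights and unique shortest paths,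
if the shortest path x⇝y intersects the shortest path u⇝v, then the shared
vertices form a single contiguous subpath: some nonempty list l is an infix of
the support of u⇝v and (possibly reversed) an infix of the support of x⇝y, and
l contains exactly the common vertices; i.e., the two shortest paths share
exactly one edge-maximal common subpath. -/
theorem shortest_paths_share_one_subpath {V : Type} (G : SimpleGraph V)
    (w : V → V → ℝ) (hw : ∀ a b, 0 ≤ w a b) (hsymm : ∀ a b, w a b = w b a)
    (husp : ∀ (s t : V) (p q : G.Walk s t), p.IsPath → q.IsPath →
      (∀ r : G.Walk s t, r.IsPath → walkWeight w p ≤ walkWeight w r) →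
      (∀ r : G.Walk s t, r.IsPath → walkWeight w q ≤ walkWeight w r) → p = q)
    (u v x y : V) (puv : G.Walk u v) (pxy : G.Walk x y)
    (hpuv : puv.IsPath)
    (hpuv_min : ∀ r : G.Walk u v, r.IsPath → walkWeight w puv ≤ walkWeight w r)
    (hpxy : pxy.IsPath)
    (hpxy_min : ∀ r : G.Walk x y, r.IsPath → walkWeight w pxy ≤ walkWeight w r)
    (hint : ∃ z : V, z ∈ puv.support ∧ z ∈ pxy.support) :
    ∃ l : List V, l ≠ [] ∧ l <:+: puv.support ∧
      (l <:+: pxy.support ∨ l.reverse <:+: pxy.support) ∧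
      ∀ z : V, (z ∈ puv.support ∧ z ∈ pxy.support) ↔ z ∈ l := by
  classical
  obtain ⟨a, b, q, hq_sub, ha, hb, hq_cover⟩ :=
    puv.exists_isSubwalk_ends_covering (· ∈ pxy.support) hint
  have hq_short : IsShortest w q :=
    (isShortest_of_forall_isPath w hw hpuv_min).of_isSubwalk w hq_sub
  obtain ⟨m, hm_path, hm_short, hm_infix⟩ :=
    (isShortest_of_forall_isPath w hw hpxy_min).exists_subpath_of_mem_support w hsymm
      hpxy ha hb
  obtain rfl : q = m := husp a b q m (isPath_of_isSubwalk hq_sub hpuv) hm_path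
    (fun r _ => hq_short r) (fun r _ => hm_short r)
  refine ⟨q.support, q.support_ne_nil, isSubwalk_iff_support_isInfix.mp hq_sub, hm_infix,
    fun z => ⟨fun ⟨hz, hz'⟩ => hq_cover z hz hz', fun hz => ⟨hq_sub.support_subset hz, ?_⟩⟩⟩
  exact hm_infix.elim (·.subset hz) (·.subset (List.mem_reverse.mpr hz))
end

section
/- Let G be an undirected graph with unique shortest paths, u a vertex, and v the nearest vertex with label λ to u. Let G'' be a subgraph of G containing u such that the shortest path u⇝v in G is either (a) entirely contained in G'', or (b) intersects a separator set C of vertices for which distances d_G(u,c) are known for all c in a candidate set containing v. Then min( min_{c ∈ C} d_G(u,c), d_{G''}(u,λ) ) = d_G(u,λ), where d_H(u,λ) = min over vertices w in H with label λ of d_H(u,w). -/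
/-- Correctness of the recursive query: let v be the nearest vertex with label
λ to u in G. Suppose either (a) the shortest path u⇝v stays in the subgraph G''
(so its G''-distance equals its G-distance), or (b) v belongs to the candidate
set C (all of whose members have label λ, with G-distances from u known), and
G''-distances dominate G-distances. Then the minimum of the separator-based
estimate min_{c∈C} d_G(u,c) and the recursive estimate d_{G''}(u,λ) equals the
true labeled distance d_G(u,λ) = d_G(u,v). -/
theorem query_correctness {V L : Type} [Fintype V] [DecidableEq V] [DecidableEq L]
    (lab : V → L) (lam : L) (dG dH : V → V → ℝ) (u v : V)
    (VH : Finset V) (hu : u ∈ VH) (C : Finset V)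
    (hvlab : lab v = lam)
    (hnearest : ∀ w : V, lab w = lam → dG u v ≤ dG u w)
    (hClab : ∀ c ∈ C, lab c = lam)
    (hdom : ∀ w ∈ VH, dG u w ≤ dH u w)
    (hcase : (v ∈ VH ∧ dH u v = dG u v) ∨ v ∈ C) :
    (C.image (dG u) ∪ (VH.filter (fun w => lab w = lam)).image (dH u)).min
      = (dG u v : WithTop ℝ) := by
  apply le_antisymm
  · -- min ≤ dG u v via membership
    rcases hcase with ⟨hvH, heq⟩ | hvC
    · apply Finset.min_le
      exact Finset.mem_union_right _ (Finset.mem_image.2 ⟨v, Finset.mem_filter.2 ⟨hvH, hvlab⟩, heq⟩)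
    · apply Finset.min_le
      exact Finset.mem_union_left _ (Finset.mem_image.2 ⟨v, hvC, rfl⟩)
  · -- dG u v ≤ every element
    apply Finset.le_min
    intro b hb
    rcases Finset.mem_union.1 hb with h | h
    · rcases Finset.mem_image.1 h with ⟨c, hc, rfl⟩
      exact_mod_cast hnearest c (hClab c hc)
    · rcases Finset.mem_image.1 h with ⟨w, hw, rfl⟩
      rcases Finset.mem_filter.1 hw with ⟨hwH, hwl⟩
      exact_mod_cast le_trans (hnearest w hwl) (hdom w hwH)
end
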